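/- Assume Σ_{i,j} p_{i,j} = 1 and that the drift is zero, i.e., Σ_{i,j} i·p_{i,j} = 0 and Σ_{i,j} j·p_{i,j} = 0. Then the determinant Δ = det [[p_{1,1}, p_{1,0}, p_{1,-1}], [p_{0,1}, p_{0,0}−1, p_{0,-1}], [p_{-1,1}, p_{-1,0}, p_{-1,-1}]] satisfies Δ = −a(1)·ã(1)·Σ_{i,j} ij·p_{i,j}. -/

import Mathlib

/-!
Write `M` for the matrix whose determinant is `Δ`. Total mass one together with zero horizontal
drift says that the row sums of `M` are `ã(1) • (1, -2, 1)`; with zero vertical drift, its column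
sums are `a(1) • (1, -2, 1)`. Adding the outer rows of `M` to its middle row and then the outer
columns to its middle column does not change the determinant and produces
`!![p₁₁, ã(1), p₁₋₁; a(1), 0, a(1); p₋₁₁, ã(1), p₋₁₋₁]`, whose determinant is
`-a(1) ã(1) (p₁₁ - p₁₋₁ - p₋₁₁ + p₋₁₋₁)`.
-/

open Matrix

theorem Finset.sum_Icc_neg_one_one {M : Type*} [AddCommMonoid M] (f : ℤ → M) :
    ∑ i ∈ Finset.Icc (-1 : ℤ) 1, f i = f (-1) + f 0 + f 1 := by
  rw [show Finset.Icc (-1 : ℤ) 1 = {-1, 0, 1} by decide, Finset.sum_insert (by decide),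
    Finset.sum_pair (by decide), add_assoc]

theorem Matrix.det_fin_three_of_mulVec_one {R : Type*} [CommRing R]
    (M : Matrix (Fin 3) (Fin 3) R) (r s : R)
    (hrow : M *ᵥ 1 = r • ![1, -2, 1]) (hcol : 1 ᵥ* M = s • ![1, -2, 1]) :
    M.det = -(r * s * (M 0 0 - M 0 2 - M 2 0 + M 2 2)) := by
  simp only [funext_iff, Fin.forall_fin_succ, IsEmpty.forall_iff, and_true, mulVec, vecMul,
    dotProduct, Fin.sum_univ_three, Pi.one_apply, one_mul, mul_one, Pi.smul_apply, smul_eq_mul,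
    Fin.isValue, Fin.succ_zero_eq_one, Fin.succ_one_eq_two, cons_val_zero, cons_val_one,
    cons_val, mul_neg] at hrow hcol
  obtain ⟨row0, row1, row2⟩ := hrow
  obtain ⟨col0, -, col2⟩ := hcol
  have h01 : M 0 1 = r - M 0 0 - M 0 2 := by linear_combination row0
  have h21 : M 2 1 = r - M 2 0 - M 2 2 := by linear_combination row2
  have h10 : M 1 0 = s - M 0 0 - M 2 0 := by linear_combination col0
  have h12 : M 1 2 = s - M 0 2 - M 2 2 := by linear_combination col2
  have h11 : M 1 1 = M 0 0 + M 0 2 + M 2 0 + M 2 2 - 2 * r - 2 * s := by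
    linear_combination row1 - col0 - col2
  rw [det_fin_three, h01, h21, h10, h12, h11]
  ring

/-- for zero-drift jump probabilities summing to 1, the determinant
`Δ = det [[p₁₁, p₁₀, p₁₋₁], [p₀₁, p₀₀-1, p₀₋₁], [p₋₁₁, p₋₁₀, p₋₁₋₁]]` equals
`- a(1) ã(1) Σ_{i,j} ij p_{i,j}`. -/
theorem determinant_delta_formula (p : ℤ → ℤ → ℝ)
    (hsum : ∑ i ∈ Finset.Icc (-1 : ℤ) 1, ∑ j ∈ Finset.Icc (-1 : ℤ) 1, p i j = 1)
    (hdx : ∑ i ∈ Finset.Icc (-1 : ℤ) 1, ∑ j ∈ Finset.Icc (-1 : ℤ) 1, (i : ℝ) * p i j = 0)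
    (hdy : ∑ i ∈ Finset.Icc (-1 : ℤ) 1, ∑ j ∈ Finset.Icc (-1 : ℤ) 1, (j : ℝ) * p i j = 0) :
    Matrix.det !![p 1 1, p 1 0, p 1 (-1);
                  p 0 1, p 0 0 - 1, p 0 (-1);
                  p (-1) 1, p (-1) 0, p (-1) (-1)] =
      -((p 1 1 + p 0 1 + p (-1) 1) * (p 1 1 + p 1 0 + p 1 (-1)) *
        ∑ i ∈ Finset.Icc (-1 : ℤ) 1, ∑ j ∈ Finset.Icc (-1 : ℤ) 1, (i : ℝ) * (j : ℝ) * p i j) := by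
  simp only [Finset.sum_Icc_neg_one_one, Int.cast_neg, Int.cast_one, Int.cast_zero]
    at hsum hdx hdy ⊢
  rw [det_fin_three_of_mulVec_one _ (p 1 1 + p 1 0 + p 1 (-1)) (p 1 1 + p 0 1 + p (-1) 1)]
  · simp only [Fin.isValue, of_apply, cons_val', cons_val_zero, cons_val_fin_one, cons_val,
      cons_val_one]
    ring
  · ext i
    fin_cases i <;> simp [mulVec, dotProduct, Fin.sum_univ_three] <;> linarith
  · ext j
    fin_cases j <;> simp [vecMul, dotProduct, Fin.sum_univ_three] <;> linarith
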